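/- arXiv:1608.05945 — 4 statements merged into one kernel-verified Lean document; each statement's English description precedes it below -/
import Mathlib

section
/- Let N ≥ 1 and let G : 𝒳 → 𝒳 be the chaotic-iterations map G(s,x) = (σ(s), F(s_0, x)). The set of periodic points of G is dense in the metric space (𝒳, d): for every (ŝ,x̂) ∈ 𝒳 and every ε > 0, there exist a point (s̃,x̃) ∈ 𝒳 and an integer p ≥ 1 such that G^p(s̃,x̃) = (s̃,x̃) and d((ŝ,x̂),(s̃,x̃)) < ε. -/
/-- Distance between two strategy sequences:
`dS s t = ∑_{k=0}^∞ |s_k - t_k| / N^(k+1)`. -/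
noncomputable def dS (N : ℕ) (s t : ℕ → Fin N) : ℝ :=
  ∑' k : ℕ, |((s k : ℕ) : ℝ) - ((t k : ℕ) : ℝ)| / (N : ℝ) ^ (k + 1)

/-- Hamming distance between two Boolean vectors. -/
noncomputable def dX (N : ℕ) (x y : Fin N → Bool) : ℝ :=
  ((Finset.univ.filter (fun j => x j ≠ y j)).card : ℝ)

/-- Distance on the phase space `𝒳 = (ℕ → Fin N) × (Fin N → Bool)`. -/
noncomputable def dE (N : ℕ) (p q : (ℕ → Fin N) × (Fin N → Bool)) : ℝ :=
  dS N p.1 q.1 + dX N p.2 q.2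

/-- Negate exactly the `k`-th coordinate of the Boolean vector `x`. -/
def Fflip (N : ℕ) (k : Fin N) (x : Fin N → Bool) : Fin N → Bool :=
  fun j => if j = k then !(x j) else x j

/-- The chaotic-iterations map `G (s, x) = (σ s, F (s 0, x))`. -/
def G (N : ℕ) (p : (ℕ → Fin N) × (Fin N → Bool)) : (ℕ → Fin N) × (Fin N → Bool) :=
  (fun n => p.1 (n + 1), Fflip N (p.1 0) p.2)

/-!
Repeating the first `n` terms of a strategy `s` gives an `n`-periodic strategy whose distance to
`s` is at most `N⁻¹ ^ n`. Along an `n`-periodic strategy, `n` steps of `G` return the strategy and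
xor the Boolean state with a fixed pattern, so `2 n` steps return the whole point.
-/

open Function

/-- `flips N s k j` is the parity of the number of times `j` occurs among `s 0, …, s (k - 1)`. -/
def flips (N : ℕ) (s : ℕ → Fin N) : ℕ → Fin N → Bool
  | 0 => fun _ => false
  | k + 1 => fun j => xor (flips N s k j) (decide (j = s k))

theorem Fflip_apply_eq_xor (N : ℕ) (k : Fin N) (x : Fin N → Bool) (j : Fin N) :
    Fflip N k x j = xor (x j) (decide (j = k)) := by
  by_cases h : j = k <;> simp [Fflip, h]

theorem G_iterate (N : ℕ) (k : ℕ) (s : ℕ → Fin N) (x : Fin N → Bool) :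
    (G N)^[k] (s, x) = (fun m => s (m + k), fun j => xor (x j) (flips N s k j)) := by
  induction k with
  | zero => simp [flips]
  | succ k ih =>
    rw [iterate_succ_apply', ih]
    ext m
    · simp [G, Nat.add_right_comm, Nat.add_assoc]
    · simp [G, Fflip_apply_eq_xor, flips]

theorem G_iterate_of_periodic {N n : ℕ} {s : ℕ → Fin N} (hs : Periodic s n) (x : Fin N → Bool) :
    (G N)^[n] (s, x) = (s, fun j => xor (x j) (flips N s n j)) := by
  rw [G_iterate]
  congr
  exact funext hs

theorem isPeriodicPt_G_of_periodic {N n : ℕ} {s : ℕ → Fin N} (hs : Periodic s n)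
    (x : Fin N → Bool) : IsPeriodicPt (G N) (2 * n) (s, x) := by
  rw [IsPeriodicPt, IsFixedPt, two_mul, iterate_add_apply, G_iterate_of_periodic hs,
    G_iterate_of_periodic hs]
  simp

theorem dX_self (N : ℕ) (x : Fin N → Bool) : dX N x x = 0 := by
  simp [dX]

theorem dS_self (N : ℕ) (s : ℕ → Fin N) : dS N s s = 0 := by
  simp [dS]

theorem Fin.abs_val_sub_val_le {N : ℕ} (a b : Fin N) : |((a : ℕ) : ℝ) - ((b : ℕ) : ℝ)| ≤ N - 1 := by
  have ha : ((a : ℕ) : ℝ) + 1 ≤ N := by exact_mod_cast a.isLt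
  have hb : ((b : ℕ) : ℝ) + 1 ≤ N := by exact_mod_cast b.isLt
  rw [abs_sub_le_iff]
  constructor <;> linarith [(a : ℕ).cast_nonneg (α := ℝ), (b : ℕ).cast_nonneg (α := ℝ)]

theorem dS_le_inv_pow_of_eq_of_lt {N n : ℕ} (hN : 2 ≤ N) {s t : ℕ → Fin N}
    (hst : ∀ k < n, s k = t k) : dS N s t ≤ (N : ℝ)⁻¹ ^ n := by
  set r : ℝ := (N : ℝ)⁻¹
  have hr0 : 0 ≤ r := by positivity
  have hr1 : r < 1 := inv_lt_one_of_one_lt₀ (by exact_mod_cast hN)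
  set f : ℕ → ℝ := fun k => |((s k : ℕ) : ℝ) - ((t k : ℕ) : ℝ)| / (N : ℝ) ^ (k + 1)
  have hf0 : ∀ k, 0 ≤ f k := fun k => by positivity
  have hfr : ∀ k, f k ≤ (1 - r) * r ^ k := fun k => by
    calc f k ≤ (N - 1) / (N : ℝ) ^ (k + 1) := by
          dsimp only [f]; gcongr; exact Fin.abs_val_sub_val_le _ _
      _ = (1 - r) * r ^ k := by simp only [r, inv_pow]; field_simp; ring
  have hgeom : Summable fun k => (1 - r) * r ^ k :=
    (summable_geometric_of_lt_one hr0 hr1).mul_left _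
  have hf : Summable f := Summable.of_nonneg_of_le hf0 hfr hgeom
  have hhead : ∑ k ∈ Finset.range n, f k = 0 :=
    Finset.sum_eq_zero fun k hk => by simp [f, hst k (Finset.mem_range.mp hk)]
  calc dS N s t = ∑' k, f (k + n) := by rw [dS, ← hf.sum_add_tsum_nat_add n, hhead, zero_add]
    _ ≤ ∑' k, (1 - r) * r ^ n * r ^ k :=
        ((summable_nat_add_iff n).mpr hf).tsum_le_tsum (fun k => (hfr _).trans_eq (by ring))
          ((summable_geometric_of_lt_one hr0 hr1).mul_left _)
    _ = r ^ n := by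
        rw [tsum_mul_left, tsum_geometric_of_lt_one hr0 hr1]
        field_simp [(sub_pos.mpr hr1).ne']

theorem exists_dS_comp_mod_lt {N : ℕ} (s : ℕ → Fin N) {ε : ℝ} (hε : 0 < ε) :
    ∃ n, 0 < n ∧ dS N s (fun k => s (k % n)) < ε := by
  rcases lt_or_ge N 2 with hN | hN
  · have : Subsingleton (Fin N) := Fin.subsingleton_iff_le_one.mpr (by omega)
    exact ⟨1, one_pos, by simpa [Subsingleton.elim (fun k => s (k % 1)) s, dS_self] using hε⟩
  · have hr1 : (N : ℝ)⁻¹ < 1 := inv_lt_one_of_one_lt₀ (by exact_mod_cast hN)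
    obtain ⟨n, hn⟩ := exists_pow_lt_of_lt_one hε hr1
    refine ⟨n + 1, n.succ_pos, lt_of_le_of_lt ?_ hn⟩
    calc dS N s (fun k => s (k % (n + 1))) ≤ (N : ℝ)⁻¹ ^ (n + 1) :=
          dS_le_inv_pow_of_eq_of_lt hN fun k hk => by rw [Nat.mod_eq_of_lt hk]
      _ ≤ (N : ℝ)⁻¹ ^ n := pow_le_pow_of_le_one (by positivity) hr1.le n.le_succ

theorem stmt4_general (N : ℕ) :
    ∀ q : (ℕ → Fin N) × (Fin N → Bool), ∀ ε : ℝ, 0 < ε →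
      ∃ p : (ℕ → Fin N) × (Fin N → Bool), ∃ k : ℕ, 1 ≤ k ∧
        (G N)^[k] p = p ∧ dE N q p < ε := by
  rintro ⟨s, x⟩ ε hε
  obtain ⟨n, hn, hs⟩ := exists_dS_comp_mod_lt s hε
  refine ⟨(fun k => s (k % n), x), 2 * n, by omega,
    isPeriodicPt_G_of_periodic ((Nat.periodic_mod n).comp s) x, ?_⟩
  simpa [dE, dX_self] using hs

/-- The periodic points of `G` are dense in `(𝒳, dE)`: within any `ε` of any
point there is a point periodic under `G` with some period `p ≥ 1`. -/
theorem stmt4 (N : ℕ) (hN : 1 ≤ N) :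
    ∀ q : (ℕ → Fin N) × (Fin N → Bool), ∀ ε : ℝ, 0 < ε →
      ∃ p : (ℕ → Fin N) × (Fin N → Bool), ∃ k : ℕ, 1 ≤ k ∧
        (G N)^[k] p = p ∧ dE N q p < ε :=
  stmt4_general N
end

section
/- Let N ≥ 1 and let G : 𝒳 → 𝒳 be the chaotic-iterations map G(s,x) = (σ(s), F(s_0, x)). Then G is topologically transitive on the metric space (𝒳, d): for any nonempty open sets U_A and U_B of 𝒳, there exists an integer n₀ > 0 such that G^{n₀}(U_A) ∩ U_B ≠ ∅. -/
/-- A set of the phase space is open for the topology induced by the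
metric `dE`. -/
def IsOpenE (N : ℕ) (U : Set ((ℕ → Fin N) × (Fin N → Bool))) : Prop :=
  ∀ p ∈ U, ∃ ε : ℝ, 0 < ε ∧ ∀ q, dE N p q < ε → q ∈ U

/-! Starting from a point `(sA, xA) ∈ UA`, follow `sA` long enough for the strategy to stay in
the ball of `UA` around it (a prefix of length `m` pins `dS` down to `2 * 2⁻¹ ^ m`), then flip
exactly the coordinates in which the current state differs from the target `xB`, and finally
continue with the target strategy `sB`: the orbit then hits the target point `(sB, xB)` itself. -/

def Fflips (N : ℕ) (l : List (Fin N)) (x : Fin N → Bool) : Fin N → Bool :=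
  l.foldl (fun y k => Fflip N k y) x

lemma Fflip_apply (N : ℕ) (k : Fin N) (x : Fin N → Bool) (j : Fin N) :
    Fflip N k x j = xor (decide (k = j)) (x j) := by
  by_cases h : k = j
  · subst h; simp [Fflip]
  · simp [Fflip, h, Ne.symm h]

lemma Fflips_apply (N : ℕ) (l : List (Fin N)) (x : Fin N → Bool) (j : Fin N) :
    Fflips N l x j = xor (l.count j).bodd (x j) := by
  induction l generalizing x with
  | nil => simp [Fflips]
  | cons k l ih =>
    rw [Fflips, List.foldl_cons, ← Fflips, ih, Fflip_apply, List.count_cons, Nat.bodd_add]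
    by_cases h : k = j <;> simp [h]

lemma Fflips_filter_ne (N : ℕ) (x y : Fin N → Bool) :
    Fflips N ((List.finRange N).filter (fun j => x j ≠ y j)) x = y := by
  funext j
  rw [Fflips_apply]
  by_cases h : x j = y j
  · rw [List.count_eq_zero.2 (by simp [h])]
    simp [h]
  · rw [List.count_filter (by simpa using h), List.count_finRange]
    revert h
    cases x j <;> cases y j <;> simp

lemma G_iterate_length_append (N : ℕ) (l : List (Fin N)) (s : ℕ → Fin N) (x : Fin N → Bool) :
    (G N)^[l.length] (l ++ₛ s, x) = (s, Fflips N l x) := by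
  induction l generalizing x with
  | nil => rfl
  | cons k l ih => exact ih (Fflip N k x)

lemma abs_val_sub_div_pow_le {N : ℕ} (a b : Fin N) (k : ℕ) :
    |((a : ℕ) : ℝ) - ((b : ℕ) : ℝ)| / (N : ℝ) ^ (k + 1) ≤ 2⁻¹ ^ k := by
  rcases eq_or_ne a b with rfl | hab
  · simp
  have h2N : (2 : ℝ) ≤ N := by
    have := Fin.val_ne_of_ne hab
    exact_mod_cast (by omega : 2 ≤ N)
  have hdiff : |((a : ℕ) : ℝ) - ((b : ℕ) : ℝ)| ≤ N :=
    (abs_sub_lt_of_nonneg_of_lt (by positivity) (by exact_mod_cast a.isLt) (by positivity)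
      (by exact_mod_cast b.isLt)).le
  calc _ ≤ (N : ℝ) / (N : ℝ) ^ (k + 1) := by gcongr
    _ = ((N : ℝ) ^ k)⁻¹ := by field_simp; ring
    _ ≤ ((2 : ℝ) ^ k)⁻¹ := by gcongr
    _ = 2⁻¹ ^ k := (inv_pow _ _).symm

lemma dS_le_of_forall_lt_eq {N : ℕ} {s t : ℕ → Fin N} {m : ℕ} (h : ∀ k < m, s k = t k) :
    dS N s t ≤ 2 * 2⁻¹ ^ m := by
  have hgeom : Summable (fun k : ℕ => (2⁻¹ : ℝ) ^ k) :=
    summable_geometric_of_lt_one (by norm_num) (by norm_num)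
  have hle (k : ℕ) : |((s k : ℕ) : ℝ) - ((t k : ℕ) : ℝ)| / (N : ℝ) ^ (k + 1)
      ≤ if m ≤ k then (2⁻¹ : ℝ) ^ k else 0 := by
    split_ifs with hk
    · exact abs_val_sub_div_pow_le _ _ k
    · simp [h k (not_le.mp hk)]
  rw [dS, ← tsum_geometric_inv_two_ge m]
  refine Summable.tsum_le_tsum hle ?_ ?_
  · exact hgeom.of_nonneg_of_le (fun k => by positivity) (fun k => abs_val_sub_div_pow_le _ _ k)
  · refine hgeom.of_nonneg_of_le (fun k => by split_ifs <;> positivity) (fun k => ?_)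
    split_ifs <;> simp

theorem stmt5_general (N : ℕ)
    (UA UB : Set ((ℕ → Fin N) × (Fin N → Bool)))
    (hUA : IsOpenE N UA)
    (hUAne : UA.Nonempty) (hUBne : UB.Nonempty) :
    ∃ n₀ : ℕ, 0 < n₀ ∧ ((G N)^[n₀] '' UA ∩ UB).Nonempty := by
  obtain ⟨⟨sA, xA⟩, hpA⟩ := hUAne
  obtain ⟨⟨sB, xB⟩, hpB⟩ := hUBne
  obtain ⟨ε, hε, hball⟩ := hUA _ hpA
  obtain ⟨n, hn⟩ := exists_pow_lt_of_lt_one hε (by norm_num : (2 : ℝ)⁻¹ < 1)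
  set pre := List.ofFn (fun k : Fin (n + 1) => sA k)
  set L := (List.finRange N).filter (fun j => Fflips N pre xA j ≠ xB j)
  have hclose : (pre ++ₛ (L ++ₛ sB), xA) ∈ UA := by
    refine hball _ ?_
    have hdS : dS N sA (pre ++ₛ (L ++ₛ sB)) ≤ 2 * 2⁻¹ ^ (n + 1) :=
      dS_le_of_forall_lt_eq fun k hk =>
        calc sA k = pre[k]'(by simpa [pre] using hk) := by simp only [pre, List.getElem_ofFn]
          _ = _ := (Stream'.get_append_left k pre _ _).symm
    have hdX : dX N xA xA = 0 := by simp [dX]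
    simp only [dE, hdX, add_zero]
    linarith [pow_succ (2⁻¹ : ℝ) n]
  have hland : (G N)^[L.length + pre.length] (pre ++ₛ (L ++ₛ sB), xA) = (sB, xB) :=
    calc (G N)^[L.length + pre.length] (pre ++ₛ (L ++ₛ sB), xA)
        = (G N)^[L.length] (L ++ₛ sB, Fflips N pre xA) := by
          rw [Function.iterate_add_apply]; exact congrArg _ (G_iterate_length_append N pre _ xA)
      _ = (sB, Fflips N L (Fflips N pre xA)) := G_iterate_length_append N L sB _
      _ = (sB, xB) := by rw [Fflips_filter_ne]
  exact ⟨_, by simp [pre], _, ⟨_, hclose, hland⟩, hpB⟩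

/-- `G` is topologically transitive on `(𝒳, dE)`: for any nonempty open sets
`U_A`, `U_B` there is `n₀ > 0` with `G^[n₀] '' U_A ∩ U_B ≠ ∅`. -/
theorem stmt5 (N : ℕ) (hN : 1 ≤ N)
    (UA UB : Set ((ℕ → Fin N) × (Fin N → Bool)))
    (hUA : IsOpenE N UA) (hUB : IsOpenE N UB)
    (hUAne : UA.Nonempty) (hUBne : UB.Nonempty) :
    ∃ n₀ : ℕ, 0 < n₀ ∧ ((G N)^[n₀] '' UA ∩ UB).Nonempty :=
  stmt5_general N UA UB hUA hUAne hUBne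
end

section
/- (Banks et al.) Let (X, d) be an infinite metric space and f : X → X a continuous map. If f is topologically transitive and the periodic points of f are dense in X, then f has sensitive dependence on initial conditions: there exists δ > 0 such that for every x ∈ X and every ε > 0 there exist y ∈ X and n ∈ ℕ with d(x,y) < ε and d(f^n(x), f^n(y)) > δ. -/
open Function Metric

private lemma iterFix {X : Type*} (f : X → X) {q : X} {p : ℕ}
    (h : f^[p] q = q) : ∀ j : ℕ, f^[j * p] q = q := by
  intro j
  induction j with
  | zero => simp
  | succ j ih => rw [Nat.succ_mul, Function.iterate_add_apply, h, ih]

private lemma iterMod {X : Type*} (f : X → X) {q : X} {p : ℕ}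
    (h : f^[p] q = q) (n : ℕ) : f^[n] q = f^[n % p] q := by
  conv_lhs => rw [← Nat.mod_add_div n p, Function.iterate_add_apply,
    mul_comm p (n / p)]
  rw [iterFix f h]

/-- **Banks et al.** On an infinite metric space, a continuous map that is
topologically transitive and has dense periodic points has sensitive
dependence on initial conditions. -/
theorem stmt8 {X : Type*} [MetricSpace X] [Infinite X] (f : X → X)
    (hf : Continuous f)
    (htrans : ∀ U V : Set X, IsOpen U → IsOpen V → U.Nonempty → V.Nonempty →
      ∃ n : ℕ, 0 < n ∧ (f^[n] '' U ∩ V).Nonempty)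
    (hdense : ∀ U : Set X, IsOpen U → U.Nonempty →
      ∃ x ∈ U, ∃ p : ℕ, 1 ≤ p ∧ f^[p] x = x) :
    ∃ δ : ℝ, 0 < δ ∧ ∀ x : X, ∀ ε : ℝ, 0 < ε →
      ∃ y : X, ∃ n : ℕ, dist x y < ε ∧ δ < dist (f^[n] x) (f^[n] y) := by
  classical
  -- two periodic points with disjoint orbits
  obtain ⟨a, -, pa, hpa, ha⟩ := hdense Set.univ isOpen_univ Set.univ_nonempty
  set Oa : Finset X := (Finset.range pa).image (fun i => f^[i] a) with hOadef
  have hmemOa : ∀ n : ℕ, f^[n] a ∈ Oa := fun n => by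
    rw [hOadef, iterMod f ha n]
    exact Finset.mem_image.mpr ⟨n % pa, Finset.mem_range.mpr (Nat.mod_lt n hpa), rfl⟩
  have hcompl : IsOpen ((↑Oa : Set X)ᶜ) := Oa.finite_toSet.isClosed.isOpen_compl
  have hcomplne : ((↑Oa : Set X)ᶜ).Nonempty := (Oa.finite_toSet.infinite_compl).nonempty
  obtain ⟨b, hb, pb, hpb, hbb⟩ := hdense _ hcompl hcomplne
  set Ob : Finset X := (Finset.range pb).image (fun i => f^[i] b) with hObdef
  have hmemOb : ∀ n : ℕ, f^[n] b ∈ Ob := fun n => by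
    rw [hObdef, iterMod f hbb n]
    exact Finset.mem_image.mpr ⟨n % pb, Finset.mem_range.mpr (Nat.mod_lt n hpb), rfl⟩
  have hdisj : ∀ s ∈ Oa, ∀ t ∈ Ob, s ≠ t := by
    intro s hs t ht hst
    rw [hOadef] at hs
    rw [hObdef] at ht
    obtain ⟨i, -, rfl⟩ := Finset.mem_image.mp hs
    obtain ⟨j, -, rfl⟩ := Finset.mem_image.mp ht
    apply hb
    have h1 : f^[j * pb - j] (f^[j] b) = b := by
      rw [← Function.iterate_add_apply, Nat.sub_add_cancel (Nat.le_mul_of_pos_right j hpb)]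
      exact iterFix f hbb j
    have hb2 : b = f^[j * pb - j + i] a := by
      rw [Function.iterate_add_apply, hst, h1]
    rw [hb2]
    exact Finset.mem_coe.mpr (hmemOa _)
  -- minimum distance between the two orbits
  have hOaNe : Oa.Nonempty := ⟨f^[0] a, hmemOa 0⟩
  have hObNe : Ob.Nonempty := ⟨f^[0] b, hmemOb 0⟩
  obtain ⟨c, hc, hcmin⟩ := Finset.exists_min_image (Oa ×ˢ Ob)
    (fun p => dist p.1 p.2) (hOaNe.product hObNe)
  obtain ⟨hc1, hc2⟩ := Finset.mem_product.mp hc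
  set δ₀ := dist c.1 c.2 with hδ₀def
  have hδ₀pos : 0 < δ₀ := dist_pos.mpr (hdisj _ hc1 _ hc2)
  have hle : ∀ s ∈ Oa, ∀ t ∈ Ob, δ₀ ≤ dist s t := fun s hs t ht =>
    hcmin (s, t) (Finset.mem_product.mpr ⟨hs, ht⟩)
  set δ : ℝ := δ₀ / 16 with hδdef
  have hδpos : 0 < δ := by rw [hδdef]; linarith
  refine ⟨δ, hδpos, fun x ε hε => ?_⟩
  -- a periodic point whose whole orbit is far from x
  have hfar : ∃ q : X, ∃ pq : ℕ, 1 ≤ pq ∧ f^[pq] q = q ∧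
      ∀ i : ℕ, 8 * δ ≤ dist x (f^[i] q) := by
    by_cases hca : ∀ s ∈ Oa, δ₀ / 2 ≤ dist x s
    · refine ⟨a, pa, hpa, ha, fun i => ?_⟩
      have := hca _ (hmemOa i)
      rw [hδdef]; linarith
    · push_neg at hca
      obtain ⟨s, hs, hxs⟩ := hca
      refine ⟨b, pb, hpb, hbb, fun i => ?_⟩
      have h1 := hle s hs _ (hmemOb i)
      have h2 := dist_triangle s x (f^[i] b)
      have h3 : dist s x = dist x s := dist_comm _ _
      rw [hδdef]; linarith
  obtain ⟨q, pq, hpq, hq, hqfar⟩ := hfar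
  set ε' := min ε δ with hε'def
  have hε'pos : 0 < ε' := lt_min hε hδpos
  -- a periodic point near x
  obtain ⟨pt, hptU, m, hm, hfm⟩ := hdense (ball x ε') isOpen_ball ⟨x, mem_ball_self hε'pos⟩
  -- the open set V around q
  set V : Set X := ⋂ i ∈ Finset.range m, f^[i] ⁻¹' ball (f^[i] q) δ with hVdef
  have hVopen : IsOpen V := isOpen_biInter_finset fun i _ =>
    isOpen_ball.preimage (hf.iterate i)
  have hqV : q ∈ V := Set.mem_iInter₂.mpr fun i _ => mem_ball_self hδpos
  obtain ⟨k, hk, w, hw⟩ := htrans (ball x ε') V isOpen_ball hVopen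
    ⟨x, mem_ball_self hε'pos⟩ ⟨q, hqV⟩
  obtain ⟨⟨z, hzU, rfl⟩, hwV⟩ := hw
  -- choose n : multiple of m with k ≤ n < k + m
  obtain ⟨n, hnk, hnkm, hfixn⟩ : ∃ n, k ≤ n ∧ n - k < m ∧ f^[n] pt = pt := by
    have A : m * ((k - 1) / m) + (k - 1) % m = k - 1 := Nat.div_add_mod (k - 1) m
    have C : (k - 1) % m < m := Nat.mod_lt _ hm
    refine ⟨m * ((k - 1) / m) + m, ?_, ?_, ?_⟩
    · generalize m * ((k - 1) / m) = P at A ⊢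
      omega
    · generalize m * ((k - 1) / m) = P at A ⊢
      omega
    · have h1 : m * ((k - 1) / m) + m = ((k - 1) / m + 1) * m := by ring
      rw [h1]
      exact iterFix f hfm _
  have hnz : f^[n] z = f^[n - k] (f^[k] z) := by
    rw [← Function.iterate_add_apply, Nat.sub_add_cancel hnk]
  have hball : f^[k] z ∈ f^[n - k] ⁻¹' ball (f^[n - k] q) δ :=
    Set.mem_iInter₂.mp hwV (n - k) (Finset.mem_range.mpr hnkm)
  have hd2 : dist (f^[n] z) (f^[n - k] q) < δ := by
    rw [hnz]
    exact mem_ball.mp hball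
  have hd1 : dist x pt < δ := by
    have := mem_ball.mp hptU
    rw [dist_comm]
    exact lt_of_lt_of_le this (min_le_right _ _)
  have hd3 : 8 * δ ≤ dist x (f^[n - k] q) := hqfar _
  by_cases hcase : δ < dist (f^[n] x) (f^[n] pt)
  · refine ⟨pt, n, ?_, hcase⟩
    have := mem_ball.mp hptU
    rw [dist_comm]
    exact lt_of_lt_of_le this (min_le_left _ _)
  · push_neg at hcase
    rw [hfixn] at hcase
    refine ⟨z, n, ?_, ?_⟩
    · have := mem_ball.mp hzU
      rw [dist_comm]
      exact lt_of_lt_of_le this (min_le_left _ _)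
    · have t3 := dist_triangle x (f^[n] z) (f^[n - k] q)
      have t1 := dist_triangle x pt (f^[n] z)
      have t2 := dist_triangle pt (f^[n] x) (f^[n] z)
      have hcase' : dist pt (f^[n] x) ≤ δ := by rw [dist_comm]; exact hcase
      linarith
end

section
/- Let N ≥ 1 and let G(s,x) = (σ(s), F(s_0, x)) on 𝒳 = (ℕ → Fin N) × (Fin N → Bool). For any initial Boolean state x, any target Boolean state x_B, any strategy prefix (s^1, …, s^{k_0}) ∈ (Fin N)^{k_0}, and any tail strategy t : ℕ → Fin N, there exist an integer n_0 with k_0 ≤ n_0 ≤ k_0 + N and a strategy s̃ : ℕ → Fin N agreeing with (s^1, …, s^{k_0}) on its first k_0 terms such that G^{n_0}(s̃, x) = (t, x_B). -/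
/-!
Running `G` for `n` steps consumes the first `n` letters of the strategy and flips, one after
another, the coordinates they name. So the strategy "prefix, then each coordinate on which the
state reached after the prefix differs from `xB` exactly once, then `t`" reaches `(t, xB)`
after at most `k₀ + N` steps.
-/

open Stream'

theorem G_iterate_length_appendStream (N : ℕ) (L : List (Fin N)) (t : ℕ → Fin N)
    (x : Fin N → Bool) :
    (G N)^[L.length] (L ++ₛ t, x) = (t, L.foldl (fun y k => Fflip N k y) x) := by
  induction L generalizing x with
  | nil => rfl
  | cons a L ih => exact ih (Fflip N a x)

theorem foldl_Fflip_of_nodup (N : ℕ) {L : List (Fin N)} (hL : L.Nodup) (x : Fin N → Bool) :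
    L.foldl (fun y k => Fflip N k y) x = fun j => if j ∈ L then !x j else x j := by
  induction L generalizing x with
  | nil => simp
  | cons a L ih =>
    obtain ⟨haL, hL⟩ := List.nodup_cons.mp hL
    funext j
    rw [List.foldl_cons, ih hL]
    by_cases hja : j = a
    · subst hja
      simp [Fflip, haL]
    · simp [Fflip, hja]

theorem foldl_Fflip_toList_filter_ne (N : ℕ) (x y : Fin N → Bool) :
    (Finset.univ.filter fun j => x j ≠ y j).toList.foldl (fun z k => Fflip N k z) x = y := by
  rw [foldl_Fflip_of_nodup N (Finset.nodup_toList _)]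
  funext j
  by_cases h : x j = y j
  · simp [h]
  · simpa [h] using Bool.eq_not_iff.mpr h

theorem stmt15_general (N : ℕ) (x xB : Fin N → Bool)
    (k₀ : ℕ) (pre : Fin k₀ → Fin N) (t : ℕ → Fin N) :
    ∃ n₀ : ℕ, k₀ ≤ n₀ ∧ n₀ ≤ k₀ + N ∧
      ∃ s' : ℕ → Fin N, (∀ i : Fin k₀, s' i = pre i) ∧
        (G N)^[n₀] (s', x) = (t, xB) := by
  set x' := (List.ofFn pre).foldl (fun y k => Fflip N k y) x
  set D := (Finset.univ.filter fun j => x' j ≠ xB j).toList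
  have hD : D.length ≤ N :=
    (Finset.length_toList _).trans_le ((Finset.card_filter_le _ _).trans (Finset.card_fin N).le)
  have hlen : (List.ofFn pre ++ D).length = k₀ + D.length := by simp
  refine ⟨k₀ + D.length, by omega, by omega, List.ofFn pre ++ D ++ₛ t, fun i => ?_, ?_⟩
  · refine (get_append_left i _ t (by omega)).trans ?_
    simp [List.getElem_append_left]
  · rw [← hlen, G_iterate_length_appendStream, List.foldl_append,
      foldl_Fflip_toList_filter_ne]

/-- Any Boolean state `x` may be steered to any target state `xB` with any
prescribed strategy prefix of length `k₀` and any tail strategy `t`: there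
are `n₀` with `k₀ ≤ n₀ ≤ k₀ + N` and a strategy `s'` agreeing with the
prefix on its first `k₀` terms such that `G^[n₀] (s', x) = (t, xB)`. -/
theorem stmt15 (N : ℕ) (hN : 1 ≤ N) (x xB : Fin N → Bool)
    (k₀ : ℕ) (pre : Fin k₀ → Fin N) (t : ℕ → Fin N) :
    ∃ n₀ : ℕ, k₀ ≤ n₀ ∧ n₀ ≤ k₀ + N ∧
      ∃ s' : ℕ → Fin N, (∀ i : Fin k₀, s' i = pre i) ∧
        (G N)^[n₀] (s', x) = (t, xB) :=
  stmt15_general N x xB k₀ pre t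
end
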